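/- Let K be a field with char K ≠ 2 and char K ≠ 3, and let H ∈ K[x_1,…,x_n]^n be cubic homogeneous with JH nilpotent and rk JH = 1. Then there exists T ∈ GL_n(K) such that H̃ := T⁻¹·H(Tx) satisfies H̃_1 ∈ K[x_2,x_3,…,x_n] and H̃_2 = H̃_3 = ⋯ = H̃_n = 0. -/

import Mathlib

/-!
Since `rk JH = 1`, all `2 × 2` minors of `JH` vanish; combined with Euler's identity
`∑ⱼ xⱼ ∂ⱼHᵢ = 3 Hᵢ` this gives `Hᵢ ∂ₖH_{i₀} = H_{i₀} ∂ₖHᵢ` for a nonzero component `H_{i₀}`.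
Differentiating this relation three times along a chain of derivatives that reduces `H_{i₀}` to a
nonzero constant (possible as `3! ≠ 0` in `K`) shows `H = c · h` for a vector `c ∈ Kⁿ` and a cubic
form `h`. Nilpotency of `JH` makes its trace `∑ᵢ cᵢ ∂ᵢh` vanish. Choosing `T` with first column
`c`, we get `T⁻¹ H(Tx) = e₁ · h(Tx)` and `∂₁ (h(Tx)) = (∑ᵢ cᵢ ∂ᵢh)(Tx) = 0`, so `h(Tx)` does not
involve `x₁`, since its exponents are at most `3` and hence invertible in `K`.
-/

open MvPolynomial

/-- The Jacobian matrix of a polynomial map. -/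
noncomputable def jac {K : Type*} [CommRing K] {m n : ℕ}
    (H : Fin m → MvPolynomial (Fin n) K) :
    Matrix (Fin m) (Fin n) (MvPolynomial (Fin n) K) :=
  Matrix.of fun i j => pderiv j (H i)

/-- The rank of the Jacobian matrix, taken over the rational function field. -/
noncomputable def jacRank {K : Type*} [Field K] {m n : ℕ}
    (H : Fin m → MvPolynomial (Fin n) K) : ℕ :=
  ((jac H).map (algebraMap (MvPolynomial (Fin n) K)
    (FractionRing (MvPolynomial (Fin n) K)))).rank

/-- The polynomial map `S · H(Tx)`. -/
noncomputable def applyST {K : Type*} [CommRing K] {m n : ℕ}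
    (S : Matrix (Fin m) (Fin m) K) (T : Matrix (Fin n) (Fin n) K)
    (H : Fin m → MvPolynomial (Fin n) K) : Fin m → MvPolynomial (Fin n) K :=
  fun i => ∑ j, C (S i j) * aeval (fun k => ∑ l, C (T k l) * X l) (H j)

open scoped Nat Matrix

theorem natCast_ne_zero_of_factorial_ne_zero {R : Type*} [Semiring R] {k d : ℕ}
    (hd : (d ! : R) ≠ 0) (hk : 0 < k) (hkd : k ≤ d) : (k : R) ≠ 0 := by
  obtain ⟨m, hm⟩ := Nat.dvd_factorial hk hkd
  intro hk0
  exact hd (by rw [hm, Nat.cast_mul, hk0, zero_mul])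

theorem factorial_three_ne_zero {R : Type*} [CommRing R] [IsDomain R] (h2 : ringChar R ≠ 2)
    (h3 : ringChar R ≠ 3) : ((3 : ℕ)! : R) ≠ 0 := by
  have h3' : (3 : R) ≠ 0 := fun h =>
    h3 (CharP.ringChar_of_prime_eq_zero Nat.prime_three (by exact_mod_cast h))
  rw [show ((3 : ℕ)! : R) = 2 * 3 by norm_num [Nat.factorial]]
  exact mul_ne_zero (Ring.two_ne_zero h2) h3'

namespace MvPolynomial

section CommSemiring

variable {R σ : Type*} [CommSemiring R] {f : MvPolynomial σ R}

theorem coeff_sub_single_pderiv (f : MvPolynomial σ R) {m : σ →₀ ℕ} {j : σ} (hm : m j ≠ 0) :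
    coeff (m - Finsupp.single j 1) (pderiv j f) = coeff m f * m j := by
  have hle : Finsupp.single j 1 ≤ m := Finsupp.single_le_iff.mpr (Nat.one_le_iff_ne_zero.mpr hm)
  rw [coeff_pderiv, tsub_add_cancel_of_le hle, Finsupp.tsub_apply, Finsupp.single_eq_same,
    ← Nat.cast_add_one, Nat.sub_one_add_one hm]

theorem natCast_apply_ne_zero_of_mem_support {d : ℕ} (hf : f.totalDegree ≤ d)
    (hd : (d ! : R) ≠ 0) {m : σ →₀ ℕ} (hm : m ∈ f.support) {j : σ} (hmj : m j ≠ 0) :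
    (m j : R) ≠ 0 :=
  natCast_ne_zero_of_factorial_ne_zero hd (Nat.pos_of_ne_zero hmj)
    (((Finsupp.le_degree j m).trans (le_totalDegree hm)).trans hf)

theorem pderiv_aeval {τ : Type*} [Fintype σ] (g : σ → MvPolynomial τ R) (f : MvPolynomial σ R)
    (j : τ) : pderiv j (aeval g f) = ∑ k, aeval g (pderiv k f) * pderiv j (g k) := by
  classical
  induction f using MvPolynomial.induction_on with
  | C a => simp
  | add p q hp hq => simp only [map_add, hp, hq, add_mul, Finset.sum_add_distrib]
  | mul_X p i hp =>
    simp only [map_mul, aeval_X, pderiv_mul, hp, pderiv_X, Pi.single_apply, mul_ite, mul_one,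
      mul_zero, apply_ite (aeval g), map_zero, ite_mul, zero_mul, Finset.sum_ite_eq,
      Finset.mem_univ, if_true, Finset.sum_mul, map_add, add_mul, Finset.sum_add_distrib]
    simp only [mul_comm, mul_assoc, add_comm]

theorem pderiv_aeval_linear [Fintype σ] [DecidableEq σ] (T : Matrix σ σ R) (f : MvPolynomial σ R)
    (j : σ) :
    pderiv j (aeval (fun k => ∑ l, C (T k l) * X l) f) =
      aeval (fun k => ∑ l, C (T k l) * X l) (∑ k, C (T k j) * pderiv k f) := by
  rw [pderiv_aeval, map_sum]
  refine Finset.sum_congr rfl fun k _ => ?_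
  simp [pderiv_X, Pi.single_apply, mul_comm]

theorem IsHomogeneous.aeval_linear [Fintype σ] {d : ℕ} (hf : f.IsHomogeneous d)
    (T : Matrix σ σ R) :
    (MvPolynomial.aeval (fun k => ∑ l, C (T k l) * X l) f).IsHomogeneous d := by
  simpa only [one_mul] using
    hf.aeval _ fun k => IsHomogeneous.sum _ _ _ fun l _ => isHomogeneous_C_mul_X _ _

end CommSemiring

section Domain

variable {R σ : Type*} [CommRing R] [IsDomain R] {f g p q : MvPolynomial σ R}

theorem pderiv_ne_zero_of_mem_support {m : σ →₀ ℕ} {j : σ} (hm : m ∈ f.support)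
    (hmj : (m j : R) ≠ 0) : pderiv j f ≠ 0 := by
  intro h
  have := coeff_sub_single_pderiv f (j := j) (fun h0 => hmj (by rw [h0, Nat.cast_zero]))
  rw [h, coeff_zero] at this
  exact mul_ne_zero (mem_support_iff.mp hm) hmj this.symm

theorem exists_pderiv_ne_zero {d : ℕ} (hf0 : f ≠ 0) (hf : f.IsHomogeneous (d + 1))
    (hd : ((d + 1)! : R) ≠ 0) : ∃ j, pderiv j f ≠ 0 := by
  obtain ⟨m, hm⟩ := exists_coeff_ne_zero hf0
  have hdeg : m.degree = d + 1 := by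
    rw [Finsupp.degree_eq_weight_one]; exact hf hm
  obtain ⟨j, hj⟩ : ∃ j, m j ≠ 0 := by
    by_contra! h
    simp [show m = 0 from Finsupp.ext h] at hdeg
  have hm' := mem_support_iff.mpr hm
  exact ⟨j, pderiv_ne_zero_of_mem_support hm'
    (natCast_apply_ne_zero_of_mem_support (hf.totalDegree hf0).le hd hm' hj)⟩

theorem notMem_vars_of_pderiv_eq_zero {d : ℕ} (hf : f.totalDegree ≤ d) (hd : (d ! : R) ≠ 0)
    {j : σ} (hj : pderiv j f = 0) : j ∉ f.vars := by
  intro hjf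
  obtain ⟨m, hm, hmj⟩ := (mem_vars_iff_mem_support j).mp hjf
  exact pderiv_ne_zero_of_mem_support hm
    (natCast_apply_ne_zero_of_mem_support hf hd hm (Finsupp.mem_support_iff.mp hmj)) hj

theorem mul_pderiv_eq_of_mul_eq (hf : f ≠ 0) (hfg : ∀ k, f * pderiv k g = g * pderiv k f)
    (hpq : f * p = g * q) (l : σ) : f * pderiv l p = g * pderiv l q := by
  have hcross : pderiv l f * p = pderiv l g * q := by
    apply mul_left_cancel₀ hf
    linear_combination pderiv l f * hpq - q * hfg l
  have := congrArg (pderiv l) hpq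
  rw [pderiv_mul, pderiv_mul] at this
  linear_combination this - hcross

theorem mul_pderiv_eq_of_minors [Fintype σ] {d : ℕ} (hd : (d : R) ≠ 0) (hf : f.IsHomogeneous d)
    (hg : g.IsHomogeneous d)
    (hminor : ∀ j k, pderiv j f * pderiv k g = pderiv k f * pderiv j g) (k : σ) :
    f * pderiv k g = g * pderiv k f := by
  have hd' : (d : MvPolynomial σ R) ≠ 0 := by
    rwa [← map_natCast C, Ne, C_eq_zero]
  apply mul_left_cancel₀ hd'
  have hsum : (∑ j, X j * pderiv j f) * pderiv k g = (∑ j, X j * pderiv j g) * pderiv k f := by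
    simp only [Finset.sum_mul]
    exact Finset.sum_congr rfl fun j _ => by linear_combination X j * hminor j k
  rw [hf.sum_X_mul_pderiv, hg.sum_X_mul_pderiv, nsmul_eq_mul, nsmul_eq_mul] at hsum
  linear_combination hsum

end Domain

section Field

variable {K σ : Type*} [Field K] {f g : MvPolynomial σ K}

theorem exists_eq_C_mul_of_mul_pderiv_eq {d : ℕ} (hf0 : f ≠ 0) (hf : f.IsHomogeneous d)
    (hg : g.IsHomogeneous d) (hd : (d ! : K) ≠ 0)
    (hfg : ∀ k, f * pderiv k g = g * pderiv k f) : ∃ c, g = C c * f := by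
  -- `f * p = g * q` survives differentiation; differentiate until `q` is a nonzero constant.
  suffices key : ∀ e (p q : MvPolynomial σ K), p.IsHomogeneous e → q.IsHomogeneous e →
      q ≠ 0 → (e ! : K) ≠ 0 → f * p = g * q → ∃ c, g = C c * f from
    key d g f hg hf hf0 hd (mul_comm f g)
  intro e
  induction e with
  | zero =>
    intro p q hp hq hq0 _ hpq
    rw [totalDegree_eq_zero_iff_eq_C.mp ((totalDegree_zero_iff_isHomogeneous σ).mpr hp)] at hpq
    rw [totalDegree_eq_zero_iff_eq_C.mp ((totalDegree_zero_iff_isHomogeneous σ).mpr hq)] at hpq hq0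
    have hb : (C (coeff 0 q) : MvPolynomial σ K) ≠ 0 := hq0
    refine ⟨coeff 0 p / coeff 0 q, mul_right_cancel₀ hb ?_⟩
    rw [← hpq, mul_right_comm, ← C_mul, div_mul_cancel₀ _ (C_ne_zero.mp hb), mul_comm]
  | succ e ih =>
    intro p q hp hq hq0 he hpq
    obtain ⟨j, hj⟩ := exists_pderiv_ne_zero hq0 hq he
    rw [Nat.factorial_succ, Nat.cast_mul] at he
    exact ih (pderiv j p) (pderiv j q) hp.pderiv hq.pderiv hj (right_ne_zero_of_mul he)
      (mul_pderiv_eq_of_mul_eq hf0 hfg hpq j)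

end Field

end MvPolynomial

theorem Matrix.mul_eq_mul_of_rank_le_one {m n L : Type*} [Fintype m] [Fintype n] [Field L]
    (N : Matrix m n L) (h : N.rank ≤ 1) (i l : m) (j k : n) :
    N i j * N l k = N i k * N l j := by
  classical
  have hrk : Module.rank L (LinearMap.range N.mulVecLin) ≤ 1 := by
    rw [← Module.finrank_eq_rank]
    exact_mod_cast h
  obtain ⟨v, hv⟩ := (rank_submodule_le_one_iff' _).mp hrk
  have hcol : ∀ j, ∃ a : L, ∀ i, N i j = a * v i := fun j => by
    obtain ⟨a, ha⟩ :=
      Submodule.mem_span_singleton.mp (hv (LinearMap.mem_range_self N.mulVecLin (Pi.single j 1)))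
    exact ⟨a, fun i => by simpa using (congr_fun ha i).symm⟩
  obtain ⟨a, ha⟩ := hcol j
  obtain ⟨b, hb⟩ := hcol k
  rw [ha, hb, ha, hb]
  ring

theorem Matrix.exists_generalLinearGroup_mulVec_eq {ι K : Type*} [Fintype ι] [DecidableEq ι]
    [Field K] {u v : ι → K} (hu : u ≠ 0) (hv : v ≠ 0) :
    ∃ T : GL ι K, (T : Matrix ι ι K) *ᵥ u = v := by
  obtain ⟨g, hg⟩ := Submodule.exists_linearEquiv_restrict_eq
    ((LinearEquiv.toSpanNonzeroSingleton K _ u hu).symm ≪≫ₗ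
      LinearEquiv.toSpanNonzeroSingleton K _ v hv)
  refine ⟨GeneralLinearGroup.toLin.symm (LinearMap.GeneralLinearGroup.ofLinearEquiv g), ?_⟩
  have hgu := hg ⟨u, Submodule.mem_span_singleton_self u⟩
  rw [LinearEquiv.trans_apply, (LinearEquiv.symm_apply_eq _).mpr
    (LinearEquiv.toSpanNonzeroSingleton_one K _ u hu).symm] at hgu
  rw [← Matrix.mulVecLin_apply, ← GeneralLinearGroup.toLin_apply]
  simpa using hgu.symm

section Jacobian

variable {K : Type*} [Field K] {m n : ℕ} {H : Fin m → MvPolynomial (Fin n) K}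

theorem jac_minor_eq_of_jacRank_le_one (hrk : jacRank H ≤ 1) (i l : Fin m) (j k : Fin n) :
    pderiv j (H i) * pderiv k (H l) = pderiv k (H i) * pderiv j (H l) := by
  apply IsFractionRing.injective (MvPolynomial (Fin n) K) (FractionRing (MvPolynomial (Fin n) K))
  simpa [jac, map_mul] using Matrix.mul_eq_mul_of_rank_le_one _ hrk i l j k

theorem exists_eq_C_mul_of_jacRank_le_one {d : ℕ} (hhom : ∀ i, (H i).IsHomogeneous (d + 1))
    (hd : ((d + 1)! : K) ≠ 0) (hrk : jacRank H ≤ 1) :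
    ∃ (c : Fin m → K) (h : MvPolynomial (Fin n) K),
      h.IsHomogeneous (d + 1) ∧ ∀ i, H i = C (c i) * h := by
  by_cases hH : ∀ i, H i = 0
  · exact ⟨0, 0, isHomogeneous_zero .., fun i => by simp [hH i]⟩
  obtain ⟨i0, hi0⟩ := not_forall.mp hH
  have hd1 : ((d + 1 : ℕ) : K) ≠ 0 := natCast_ne_zero_of_factorial_ne_zero hd d.succ_pos le_rfl
  choose c hc using fun i => exists_eq_C_mul_of_mul_pderiv_eq hi0 (hhom i0) (hhom i) hd
    (mul_pderiv_eq_of_minors hd1 (hhom i0) (hhom i) fun j k =>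
      jac_minor_eq_of_jacRank_le_one hrk i0 i j k)
  exact ⟨c, H i0, hhom i0, hc⟩

end Jacobian

section Conjugation

variable {K : Type*} [CommRing K] {m n : ℕ} {h : MvPolynomial (Fin n) K}

theorem applyST_eq_of_eq_C_mul {H : Fin m → MvPolynomial (Fin n) K} {c : Fin m → K}
    (hH : ∀ i, H i = C (c i) * h) (S : Matrix (Fin m) (Fin m) K) (T : Matrix (Fin n) (Fin n) K)
    (i : Fin m) :
    applyST S T H i = C ((S *ᵥ c) i) * aeval (fun k => ∑ l, C (T k l) * X l) h := by
  simp [applyST, hH, Matrix.mulVec, dotProduct, Finset.sum_mul, mul_assoc]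

theorem applyST_inv_eq_of_eq_C_mul {H : Fin n → MvPolynomial (Fin n) K} {c : Fin n → K}
    (hH : ∀ i, H i = C (c i) * h) {T : GL (Fin n) K} {z : Fin n}
    (hT : (T : Matrix (Fin n) (Fin n) K) *ᵥ Pi.single z 1 = c) (i : Fin n) :
    applyST ((T⁻¹ : GL (Fin n) K) : Matrix (Fin n) (Fin n) K) T H i =
      C ((Pi.single z 1 : Fin n → K) i) *
        aeval (fun k => ∑ l, C ((T : Matrix (Fin n) (Fin n) K) k l) * X l) h := by
  rw [applyST_eq_of_eq_C_mul hH, ← hT, Matrix.mulVec_mulVec, ← Units.val_mul, inv_mul_cancel,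
    Units.val_one, Matrix.one_mulVec]

theorem trace_jac_eq_of_eq_C_mul {H : Fin n → MvPolynomial (Fin n) K} {c : Fin n → K}
    (hH : ∀ i, H i = C (c i) * h) : (jac H).trace = ∑ i, C (c i) * pderiv i h := by
  simp [Matrix.trace, jac, hH]

end Conjugation

/-- If `char K ≠ 2, 3` and `H ∈ K[x]ⁿ` is cubic homogeneous with `JH` nilpotent and
`rk JH = 1`, then after a linear conjugation `H̃ = T⁻¹·H(Tx)` one has
`H̃₁ ∈ K[x₂,…,xₙ]` and `H̃₂ = ⋯ = H̃ₙ = 0`. -/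
theorem cubic_nilpotent_rank_one_normal_form {K : Type*} [Field K]
    (h2 : ringChar K ≠ 2) (h3 : ringChar K ≠ 3)
    {n : ℕ} (H : Fin n → MvPolynomial (Fin n) K)
    (hhom : ∀ i, (H i).IsHomogeneous 3)
    (hnil : IsNilpotent (jac H)) (hrk : jacRank H = 1) :
    ∃ hn : 0 < n, ∃ T : Matrix.GeneralLinearGroup (Fin n) K,
      (applyST ((T⁻¹ : Matrix.GeneralLinearGroup (Fin n) K) : Matrix (Fin n) (Fin n) K)
          (T : Matrix (Fin n) (Fin n) K) H ⟨0, hn⟩ ∈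
        supported K {j : Fin n | j ≠ ⟨0, hn⟩}) ∧
      ∀ i : Fin n, 1 ≤ (i : ℕ) →
        applyST ((T⁻¹ : Matrix.GeneralLinearGroup (Fin n) K) : Matrix (Fin n) (Fin n) K)
          (T : Matrix (Fin n) (Fin n) K) H i = 0 := by
  have h6 : ((2 + 1)! : K) ≠ 0 := factorial_three_ne_zero h2 h3
  obtain ⟨c, h, hh, hH⟩ := exists_eq_C_mul_of_jacRank_le_one hhom h6 hrk.le
  have hc : c ≠ 0 := by
    rintro rfl
    have : jac H = 0 := by ext i j; simp [jac, hH]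
    simp [jacRank, this] at hrk
  obtain ⟨i₀, -⟩ := Function.ne_iff.mp hc
  have hn : 0 < n := i₀.pos
  set z : Fin n := ⟨0, hn⟩
  obtain ⟨T, hT⟩ := Matrix.exists_generalLinearGroup_mulVec_eq
    (Pi.single_ne_zero_iff.mpr one_ne_zero : Pi.single z (1 : K) ≠ 0) hc
  have hTz : ∀ k, (T : Matrix (Fin n) (Fin n) K) k z = c k := fun k => by
    rw [← hT, Matrix.mulVec_single_one, Matrix.col_apply]
  have htr : ∑ k, C (c k) * pderiv k h = 0 :=
    trace_jac_eq_of_eq_C_mul hH ▸ (Matrix.isNilpotent_trace_of_isNilpotent hnil).eq_zero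
  have hFz : z ∉ (aeval (fun k => ∑ l, C ((T : Matrix (Fin n) (Fin n) K) k l) * X l) h).vars :=
    notMem_vars_of_pderiv_eq_zero (hh.aeval_linear _).totalDegree_le h6 (by
      rw [pderiv_aeval_linear]
      simp only [hTz, htr, map_zero])
  refine ⟨hn, T, ?_, fun i hi => ?_⟩
  · rw [applyST_inv_eq_of_eq_C_mul hH hT, Pi.single_eq_same, C_1, one_mul, mem_supported]
    exact fun j hj (hjz : j = z) => hFz (hjz ▸ hj)
  · rw [applyST_inv_eq_of_eq_C_mul hH hT, Pi.single_eq_of_ne (fun hiz => by simp [hiz, z] at hi),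
      C_0, zero_mul]
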